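/- Under the hypotheses of Theorem 1 (f a positive differentiable probability density on (0,∞) with sup|f'| ≤ μ, η = lim_{y→∞}(−f(y)/f'(y)) ∈ (0,∞), finite mean, and lim_{y→∞} y·f(y) = 0; a > 0; and for each N the optimal uniform (in dB) codebook y_n = a·(1 + L_{η/a}(N))^{n−1}, 1 ≤ n ≤ N), the gradient norm of the normalized average power satisfies: for every ε > 0 there exist a constant C > 0 and an integer N_0 such that for all N ≥ N_0, ‖∇𝒫(N)‖ ≤ C·N^{−3/2 + ε}. -/

import Mathlib

/-!
For a geometric codebook `y (n + 1) = (1 + L) * y n`, the partial derivative of `𝒫` in `y n`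
equals `(f (y n) * (y (n + 1) - y n) - (F (y (n + 1)) - F (y n))) / (y n) ^ 2`. For `n < N` this
is a second-order Taylor remainder of `F`, hence at most `μ / 2 * L ^ 2` since `|f'| ≤ μ`. For
`n = N` (where `F (y (N + 1)) = 1`) it is `O(L ^ 2)` because `y N = η / L → ∞` and `y f(y) → 0`.
Hence `‖∇𝒫‖ = O(√N * L ^ 2)`. Finally `L (1 + L) ^ (N - 1) = η / a` forces `L = O(N ^ (δ - 1))`
for every `δ > 0`: Bernoulli's inequality on `k` blocks of `(N - 1) / k` factors gives
`L ^ (k + 1) * N ^ k = O(1)`.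
-/

open MeasureTheory Set Filter

/-- The geometric (uniform in dB) quantization levels `y n = a * r^(n-1)`. -/
noncomputable def quantLevels (a r : ℝ) (n : ℕ) : ℝ := a * r ^ (n - 1)

/-- The normalized average power `𝒫` regarded as a function of the single level
`y n` (substituted by `t`), with the other levels `y k` fixed and `F (y (N+1)) = 1`. -/
noncomputable def avgPowerFun (F : ℝ → ℝ) (N : ℕ) (y : ℕ → ℝ) (n : ℕ) (t : ℝ) : ℝ :=
  ∑ k ∈ Finset.Icc 1 N,
    ((if k = N then (1:ℝ) else F (if k + 1 = n then t else y (k + 1))) -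
        F (if k = n then t else y k)) /
      (if k = n then t else y k)

/-- Euclidean norm of the gradient of `𝒫` with respect to `y 2, …, y N`
(`y 1` being fixed). -/
noncomputable def gradNormP (F : ℝ → ℝ) (N : ℕ) (y : ℕ → ℝ) : ℝ :=
  Real.sqrt (∑ n ∈ Finset.Icc 2 N, (deriv (avgPowerFun F N y n) (y n)) ^ 2)

open Asymptotics Topology

theorem abs_sub_sub_mul_le_of_abs_deriv_le {F f f' : ℝ → ℝ} {μ x z : ℝ} (hxz : x ≤ z)
    (hF : ∀ t ∈ Icc x z, HasDerivAt F (f t) t) (hf : ∀ t ∈ Icc x z, HasDerivAt f (f' t) t)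
    (hf' : ∀ t ∈ Icc x z, |f' t| ≤ μ) :
    |F z - F x - f x * (z - x)| ≤ μ / 2 * (z - x) ^ 2 := by
  have hlip : ∀ t ∈ Icc x z, |f t - f x| ≤ μ * (t - x) :=
    norm_image_sub_le_of_norm_deriv_le_segment' (fun t ht => (hf t ht).hasDerivWithinAt)
      (fun t ht => hf' t (Ico_subset_Icc_self ht))
  have hrem : ∀ t ∈ Icc x z,
      HasDerivAt (fun s => F s - F x - f x * (s - x)) (f t - f x) t := fun t ht => by
    simpa using
      ((hF t ht).sub_const (F x)).fun_sub (((hasDerivAt_id t).sub_const x).const_mul (f x))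
  have hbound : ∀ t, HasDerivAt (fun s => μ / 2 * (s - x) ^ 2) (μ * (t - x)) t := fun t => by
    refine ((((hasDerivAt_id t).sub_const x).pow 2).const_mul (μ / 2)).congr_deriv ?_
    simp only [id]; ring
  simpa using image_norm_le_of_norm_deriv_right_le_deriv_boundary
    (fun t ht => (hrem t ht).continuousAt.continuousWithinAt)
    (fun t ht => (hrem t (Ico_subset_Icc_self ht)).hasDerivWithinAt) (by simp) hbound
    (fun t ht => hlip t (Ico_subset_Icc_self ht)) (right_mem_Icc.2 hxz)

theorem sqrt_sum_sq_le_sqrt_card_mul {ι : Type*} {s : Finset ι} {g : ι → ℝ} {M : ℝ} (hM : 0 ≤ M)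
    (h : ∀ i ∈ s, |g i| ≤ M) : √(∑ i ∈ s, g i ^ 2) ≤ √(s.card) * M := by
  rw [← Real.sqrt_sq hM, ← Real.sqrt_mul (Nat.cast_nonneg _), ← nsmul_eq_mul]
  gcongr
  refine Finset.sum_le_card_nsmul _ _ _ fun i hi => ?_
  rw [← sq_abs]
  gcongr
  exact h i hi

theorem pow_succ_mul_pow_le_mul_one_add_pow {x : ℝ} (hx : 0 ≤ x) (m k : ℕ) :
    x ^ (k + 1) * (m : ℝ) ^ k ≤ x * (1 + x) ^ (m * k) := by
  have hbern : (m : ℝ) * x ≤ (1 + x) ^ m := by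
    linarith [one_add_mul_le_pow (show (-2 : ℝ) ≤ x by linarith) m]
  calc x ^ (k + 1) * (m : ℝ) ^ k = x * (m * x) ^ k := by ring
    _ ≤ x * ((1 + x) ^ m) ^ k := by gcongr
    _ = x * (1 + x) ^ (m * k) := by rw [pow_mul]

theorem pow_succ_mul_pow_le_of_mul_one_add_pow_eq {x c : ℝ} {N k : ℕ} (hx : 0 ≤ x)
    (hk : 1 ≤ k) (hN : k + 1 ≤ N) (h : x * (1 + x) ^ (N - 1) = c) :
    x ^ (k + 1) * (N : ℝ) ^ k ≤ (2 * k) ^ k * c := by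
  set m := (N - 1) / k
  have hmk : m * k ≤ N - 1 := Nat.div_mul_le_self _ _
  have hm : 1 ≤ m := (Nat.one_le_div_iff (by omega)).2 (by omega)
  have hNm : N ≤ 2 * k * m := by
    have hdiv : k * m + (N - 1) % k = N - 1 := Nat.div_add_mod _ _
    have hmod := Nat.mod_lt (N - 1) (show 0 < k by omega)
    have hkm : k * 1 ≤ k * m := Nat.mul_le_mul_left k hm
    rw [mul_assoc]
    omega
  calc x ^ (k + 1) * (N : ℝ) ^ k ≤ x ^ (k + 1) * ((2 * k * m : ℕ) : ℝ) ^ k := by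
        gcongr
    _ = (2 * k) ^ k * (x ^ (k + 1) * (m : ℝ) ^ k) := by push_cast; ring
    _ ≤ (2 * k) ^ k * (x * (1 + x) ^ (m * k)) :=
        mul_le_mul_of_nonneg_left (pow_succ_mul_pow_le_mul_one_add_pow hx m k) (by positivity)
    _ ≤ (2 * k) ^ k * c := by
        rw [← h]; gcongr; linarith

theorem le_mul_rpow_of_pow_succ_mul_pow_le {x B δ : ℝ} {N k : ℕ} (hB : 1 ≤ B)
    (hN : 1 ≤ N) (hδ : 1 ≤ δ * (k + 1)) (h : x ^ (k + 1) * (N : ℝ) ^ k ≤ B) :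
    x ≤ B * (N : ℝ) ^ (δ - 1) := by
  have hN' : (1 : ℝ) ≤ N := by exact_mod_cast hN
  have hNpos : (0 : ℝ) < N := by linarith
  refine le_of_pow_le_pow_left₀ (Nat.succ_ne_zero k) (by positivity) ?_
  refine le_of_mul_le_mul_right ?_ (pow_pos hNpos k)
  calc x ^ (k + 1) * (N : ℝ) ^ k ≤ B := h
    _ ≤ B ^ (k + 1) * 1 := by rw [mul_one]; exact le_self_pow₀ hB (by omega)
    _ ≤ B ^ (k + 1) * (N : ℝ) ^ (δ * (k + 1) - 1) := by
        gcongr; exact Real.one_le_rpow hN' (by linarith)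
    _ = (B * (N : ℝ) ^ (δ - 1)) ^ (k + 1) * (N : ℝ) ^ k := by
        rw [mul_pow, ← Real.rpow_mul_natCast hNpos.le, ← Real.rpow_natCast (N : ℝ) k, mul_assoc,
          ← Real.rpow_add hNpos]
        push_cast; ring_nf

theorem isBigO_rpow_of_mul_one_add_pow_eq {L : ℕ → ℝ} {c : ℝ}
    (hL : ∀ᶠ N in atTop, 0 < L N ∧ L N * (1 + L N) ^ (N - 1) = c) {δ : ℝ} (hδ : 0 < δ) :
    L =O[atTop] fun N => (N : ℝ) ^ (δ - 1) := by
  obtain ⟨k, hk, hkδ⟩ : ∃ k : ℕ, 1 ≤ k ∧ 1 ≤ δ * (k + 1) := by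
    refine ⟨⌈1 / δ⌉₊, Nat.ceil_pos.2 (by positivity), ?_⟩
    have := Nat.le_ceil (1 / δ)
    rw [div_le_iff₀ hδ] at this
    nlinarith
  refine IsBigO.of_bound (max 1 ((2 * k) ^ k * c)) ?_
  filter_upwards [hL, eventually_ge_atTop (k + 1)] with N ⟨hpos, heq⟩ hN
  rw [Real.norm_of_nonneg hpos.le, Real.norm_of_nonneg (by positivity)]
  exact le_mul_rpow_of_pow_succ_mul_pow_le (le_max_left _ _) (by omega) hkδ
    ((pow_succ_mul_pow_le_of_mul_one_add_pow_eq hpos.le hk hN heq).trans (le_max_right _ _))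

theorem tendsto_nhdsGT_zero_of_mul_one_add_pow_eq {L : ℕ → ℝ} {c : ℝ}
    (hL : ∀ᶠ N in atTop, 0 < L N ∧ L N * (1 + L N) ^ (N - 1) = c) :
    Tendsto L atTop (𝓝[>] 0) := by
  have hrpow : Tendsto (fun N : ℕ => (N : ℝ) ^ ((1 / 2 : ℝ) - 1)) atTop (𝓝 0) := by
    rw [show (1 / 2 : ℝ) - 1 = -(1 / 2) by norm_num]
    exact (tendsto_rpow_neg_atTop one_half_pos).comp tendsto_natCast_atTop_atTop
  exact tendsto_nhdsWithin_iff.2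
    ⟨(isBigO_rpow_of_mul_one_add_pow_eq hL one_half_pos).trans_tendsto hrpow,
      hL.mono fun N hN => hN.1⟩

theorem integral_Ioc_mem_Icc_of_integral_Ioi_eq_one {f : ℝ → ℝ}
    (hf0 : ∀ x ∈ Ioi (0 : ℝ), 0 ≤ f x)
    (hfint : IntegrableOn f (Ioi 0)) (hfone : ∫ x in Ioi (0 : ℝ), f x = 1) (x : ℝ) :
    ∫ t in Ioc (0 : ℝ) x, f t ∈ Icc 0 1 := by
  constructor
  · exact setIntegral_nonneg measurableSet_Ioc fun t ht => hf0 t ht.1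
  · rw [← hfone]
    refine setIntegral_mono_set hfint ?_ (Ioc_subset_Ioi_self.eventuallyLE)
    filter_upwards [ae_restrict_mem measurableSet_Ioi] with t ht using hf0 t ht

theorem hasDerivAt_avgPowerFun {F : ℝ → ℝ} {N n : ℕ} {y : ℕ → ℝ} {t d : ℝ} (hn : 2 ≤ n)
    (hnN : n ≤ N) (ht : t ≠ 0) (hF : HasDerivAt F d t) :
    HasDerivAt (avgPowerFun F N y n)
      (d / y (n - 1) - (d * t + ((if n = N then 1 else F (y (n + 1))) - F t)) / t ^ 2) t := by
  set c : ℝ := if n = N then 1 else F (y (n + 1))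
  have hterm : ∀ k ∈ Finset.Icc 1 N, HasDerivAt
      (fun t => ((if k = N then 1 else F (if k + 1 = n then t else y (k + 1))) -
        F (if k = n then t else y k)) / (if k = n then t else y k))
      ((if k = n - 1 then d / y (n - 1) else 0) -
        (if k = n then (d * t + (c - F t)) / t ^ 2 else 0)) t := by
    intro k hk
    rcases eq_or_ne k n with rfl | hkn
    · have hder := ((hasDerivAt_const t c).sub hF).div (hasDerivAt_id t) ht
      simp only [if_neg (show k + 1 ≠ k by omega), if_neg (show k ≠ k - 1 by omega), if_true]
      refine hder.congr_deriv ?_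
      simp only [id, Pi.sub_apply]; ring
    rcases eq_or_ne k (n - 1) with rfl | hk
    · simp only [if_neg hkn, if_neg (show n - 1 ≠ N by omega), if_pos (show n - 1 + 1 = n by omega),
        if_true, sub_zero]
      exact (hF.sub_const _).div_const _
    · simp only [if_neg hkn, if_neg hk, if_neg (show k + 1 ≠ n by omega), sub_zero]
      exact hasDerivAt_const _ _
  have hn1 : n - 1 ∈ Finset.Icc 1 N := Finset.mem_Icc.2 ⟨by omega, by omega⟩
  have hn' : n ∈ Finset.Icc 1 N := Finset.mem_Icc.2 ⟨by omega, hnN⟩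
  refine (HasDerivAt.fun_sum hterm).congr_deriv ?_
  simp only [Finset.sum_sub_distrib, Finset.sum_ite_eq', hn1, hn', if_true]

theorem deriv_avgPowerFun_of_eq_one_add_mul {F : ℝ → ℝ} {N n : ℕ} {y : ℕ → ℝ} {l d : ℝ}
    (hn : 2 ≤ n) (hnN : n ≤ N) (hy : 0 < y (n - 1)) (hl : 0 ≤ l)
    (hyn : y n = (1 + l) * y (n - 1)) (hF : HasDerivAt F d (y n)) :
    deriv (avgPowerFun F N y n) (y n) =
      (d * (l * y n) - ((if n = N then 1 else F (y (n + 1))) - F (y n))) / y n ^ 2 := by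
  have hyn0 : y n ≠ 0 := by rw [hyn]; positivity
  rw [(hasDerivAt_avgPowerFun hn hnN hyn0 hF).deriv, hyn]
  field_simp
  ring

theorem abs_deriv_avgPowerFun_le_of_lt {F f f' : ℝ → ℝ} {N n : ℕ} {y : ℕ → ℝ} {l μ : ℝ}
    (hn : 2 ≤ n) (hnN : n < N) (hy : 0 < y (n - 1)) (hl : 0 ≤ l)
    (hyn : y n = (1 + l) * y (n - 1)) (hyn' : y (n + 1) = (1 + l) * y n)
    (hF : ∀ t ∈ Icc (y n) (y (n + 1)), HasDerivAt F (f t) t)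
    (hf : ∀ t ∈ Icc (y n) (y (n + 1)), HasDerivAt f (f' t) t)
    (hf' : ∀ t ∈ Icc (y n) (y (n + 1)), |f' t| ≤ μ) :
    |deriv (avgPowerFun F N y n) (y n)| ≤ μ / 2 * l ^ 2 := by
  have hpos : 0 < y n := by rw [hyn]; positivity
  have hstep : y (n + 1) - y n = l * y n := by rw [hyn']; ring
  have hle : y n ≤ y (n + 1) := by nlinarith
  have hself : y n ∈ Icc (y n) (y (n + 1)) := left_mem_Icc.2 hle
  have htaylor := abs_sub_sub_mul_le_of_abs_deriv_le hle hF hf hf'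
  rw [deriv_avgPowerFun_of_eq_one_add_mul hn hnN.le hy hl hyn (hF _ hself), if_neg hnN.ne,
    abs_div, abs_of_pos (pow_pos hpos 2), div_le_iff₀ (pow_pos hpos 2)]
  calc |f (y n) * (l * y n) - (F (y (n + 1)) - F (y n))|
      = |F (y (n + 1)) - F (y n) - f (y n) * (y (n + 1) - y n)| := by
        rw [abs_sub_comm, hstep]
    _ ≤ μ / 2 * (y (n + 1) - y n) ^ 2 := htaylor
    _ = μ / 2 * l ^ 2 * y n ^ 2 := by rw [hstep]; ring

theorem abs_deriv_avgPowerFun_self_le {F : ℝ → ℝ} {N : ℕ} {y : ℕ → ℝ} {l d : ℝ}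
    (hN : 2 ≤ N) (hy : 0 < y (N - 1)) (hl : 0 ≤ l) (hyN : y N = (1 + l) * y (N - 1))
    (hF : HasDerivAt F d (y N)) (hd : 0 ≤ d) (htail : y N * d ≤ 1)
    (hF0 : 0 ≤ F (y N)) (hF1 : F (y N) ≤ 1) :
    |deriv (avgPowerFun F N y N) (y N)| ≤ (1 + l) / y N ^ 2 := by
  have hpos : 0 < y N := by rw [hyN]; positivity
  rw [deriv_avgPowerFun_of_eq_one_add_mul hN le_rfl hy hl hyN hF, if_pos rfl, abs_div,
    abs_of_pos (pow_pos hpos 2)]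
  gcongr
  have h1 : 0 ≤ d * (l * y N) := by positivity
  have h2 : d * (l * y N) ≤ l := by nlinarith
  rw [abs_le]
  constructor <;> linarith

theorem quantLevels_pos {a r : ℝ} (ha : 0 < a) (hr : 0 < r) (n : ℕ) : 0 < quantLevels a r n := by
  unfold quantLevels; positivity

theorem quantLevels_succ {a r : ℝ} {n : ℕ} (hn : 1 ≤ n) :
    quantLevels a r (n + 1) = r * quantLevels a r n := by
  unfold quantLevels
  rw [show n + 1 - 1 = n - 1 + 1 by omega, pow_succ]
  ring

theorem mul_quantLevels_self_eq {a l c : ℝ} {N : ℕ} (ha : a ≠ 0)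
    (h : l * (1 + l) ^ (N - 1) = c / a) : l * quantLevels a (1 + l) N = c := by
  rw [quantLevels, mul_left_comm, h]
  field_simp

theorem gradNormP_quantLevels_le {f f' F : ℝ → ℝ} {μ η a l : ℝ} {N : ℕ} (hη : 0 < η) (ha : 0 < a)
    (hl : 0 < l) (hl1 : l ≤ 1) (hlη : l * (1 + l) ^ (N - 1) = η / a)
    (hF : ∀ x ∈ Ioi (0 : ℝ), HasDerivAt F (f x) x) (hf : ∀ x ∈ Ioi (0 : ℝ), HasDerivAt f (f' x) x)
    (hf' : ∀ x ∈ Ioi (0 : ℝ), |f' x| ≤ μ) (hf0 : ∀ x ∈ Ioi (0 : ℝ), 0 ≤ f x)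
    (hF01 : ∀ x, F x ∈ Icc 0 1)
    (htail : quantLevels a (1 + l) N * f (quantLevels a (1 + l) N) ≤ 1) :
    gradNormP F N (quantLevels a (1 + l)) ≤ √N * (max (μ / 2) (2 / η ^ 2) * l ^ 2) := by
  set y := quantLevels a (1 + l)
  have hy : ∀ n, 0 < y n := quantLevels_pos ha (by linarith)
  have hyN : l * y N = η := mul_quantLevels_self_eq ha.ne' hlη
  have hIcc : ∀ n, ∀ t ∈ Icc (y n) (y (n + 1)), t ∈ Ioi (0 : ℝ) :=
    fun n t ht => (hy n).trans_le ht.1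
  unfold gradNormP
  refine (sqrt_sum_sq_le_sqrt_card_mul (M := max (μ / 2) (2 / η ^ 2) * l ^ 2) (by positivity)
    fun n hn => ?_).trans ?_
  · obtain ⟨hn2, hnN⟩ := Finset.mem_Icc.1 hn
    have hyn : y n = (1 + l) * y (n - 1) := by
      simpa only [Nat.sub_add_cancel (show 1 ≤ n by omega)] using
        quantLevels_succ (a := a) (r := 1 + l) (show 1 ≤ n - 1 by omega)
    rcases hnN.lt_or_eq with hlt | rfl
    · calc |deriv (avgPowerFun F N y n) (y n)| ≤ μ / 2 * l ^ 2 :=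
            abs_deriv_avgPowerFun_le_of_lt hn2 hlt (hy _) hl.le hyn (quantLevels_succ (by omega))
              (fun t ht => hF t (hIcc n t ht)) (fun t ht => hf t (hIcc n t ht))
              (fun t ht => hf' t (hIcc n t ht))
        _ ≤ max (μ / 2) (2 / η ^ 2) * l ^ 2 := by gcongr; exact le_max_left _ _
    · calc |deriv (avgPowerFun F n y n) (y n)| ≤ (1 + l) / y n ^ 2 :=
            abs_deriv_avgPowerFun_self_le hn2 (hy _) hl.le hyn (hF _ (hy n)) (hf0 _ (hy n)) htail
              (hF01 _).1 (hF01 _).2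
        _ = (1 + l) / η ^ 2 * l ^ 2 := by
            rw [← hyN]; field_simp
        _ ≤ max (μ / 2) (2 / η ^ 2) * l ^ 2 := by
            gcongr
            exact le_max_of_le_right (by gcongr; linarith)
  · gcongr
    simp

theorem eventually_quantLevels_mul_le_one {f : ℝ → ℝ} {L : ℕ → ℝ} {η a : ℝ} (hη : 0 < η)
    (ha : 0 < a)
    (hf : Tendsto (fun y : ℝ => y * f y) atTop (𝓝 0))
    (hL : ∀ᶠ N in atTop, 0 < L N ∧ L N * (1 + L N) ^ (N - 1) = η / a) :
    ∀ᶠ N in atTop, quantLevels a (1 + L N) N * f (quantLevels a (1 + L N) N) ≤ 1 := by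
  have hlast : ∀ᶠ N in atTop, quantLevels a (1 + L N) N = η / L N :=
    hL.mono fun N ⟨hpos, heq⟩ =>
      eq_div_of_mul_eq hpos.ne' ((mul_comm _ _).trans (mul_quantLevels_self_eq ha.ne' heq))
  have hlast_tendsto : Tendsto (fun N => η / L N) atTop atTop :=
    (tendsto_inv_nhdsGT_zero.comp (tendsto_nhdsGT_zero_of_mul_one_add_pow_eq hL)).const_mul_atTop
      hη
  filter_upwards [hlast, hlast_tendsto.eventually (hf.eventually (eventually_le_nhds one_pos))]
    with N hN htail
  rwa [hN]

theorem stmt8_general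
    (f f' F : ℝ → ℝ) (μ η a : ℝ)
    (hη0 : 0 < η) (ha : 0 < a)
    (hfpos : ∀ x ∈ Ioi (0:ℝ), 0 < f x)
    (hfder : ∀ x ∈ Ioi (0:ℝ), HasDerivAt f (f' x) x)
    (hf'bd : ∀ x ∈ Ioi (0:ℝ), |f' x| ≤ μ)
    (hfint : IntegrableOn f (Ioi 0))
    (hfone : ∫ x in Ioi (0:ℝ), f x = 1)
    (hyf : Tendsto (fun y : ℝ => y * f y) atTop (nhds 0))
    (hF : ∀ x, F x = ∫ t in Ioc (0:ℝ) x, f t)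
    (hF' : ∀ x ∈ Ioi (0:ℝ), HasDerivAt F (f x) x)
    (L : ℕ → ℝ)
    (hL : ∀ N : ℕ, 3 ≤ N → 0 < L N ∧ L N * (1 + L N) ^ (N - 1) = η / a) :
    ∀ ε : ℝ, 0 < ε →
      ∃ C : ℝ, 0 < C ∧ ∃ N₀ : ℕ, ∀ N : ℕ, N₀ ≤ N →
        gradNormP F N (quantLevels a (1 + L N)) ≤
          C * (N : ℝ) ^ (-(3:ℝ)/2 + ε) := by
  intro ε hε
  have hf0 : ∀ x ∈ Ioi (0 : ℝ), 0 ≤ f x := fun x hx => (hfpos x hx).le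
  have hF01 : ∀ x, F x ∈ Icc 0 1 := fun x =>
    hF x ▸ integral_Ioc_mem_Icc_of_integral_Ioi_eq_one hf0 hfint hfone x
  have hLev : ∀ᶠ N in atTop, 0 < L N ∧ L N * (1 + L N) ^ (N - 1) = η / a :=
    eventually_atTop.2 ⟨3, hL⟩
  have hL1 : ∀ᶠ N in atTop, L N ≤ 1 :=
    (tendsto_nhdsWithin_iff.1 (tendsto_nhdsGT_zero_of_mul_one_add_pow_eq hLev)).1.eventually
      (eventually_le_nhds one_pos)
  obtain ⟨B, hB, hLB⟩ := (isBigO_rpow_of_mul_one_add_pow_eq hLev (half_pos hε)).exists_pos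
  refine ⟨max (μ / 2) (2 / η ^ 2) * B ^ 2, by positivity, ?_⟩
  rw [← eventually_atTop]
  filter_upwards [hLev, hL1, eventually_quantLevels_mul_le_one hη0 ha hyf hLev, hLB.bound,
    eventually_ge_atTop 1] with N ⟨hpos, heq⟩ hL1 htail hLB hN
  have hNpos : (0 : ℝ) < N := by exact_mod_cast hN
  rw [Real.norm_of_nonneg hpos.le, Real.norm_of_nonneg (by positivity)] at hLB
  calc gradNormP F N (quantLevels a (1 + L N))
      ≤ √N * (max (μ / 2) (2 / η ^ 2) * L N ^ 2) :=
        gradNormP_quantLevels_le hη0 ha hpos hL1 heq hF' hfder hf'bd hf0 hF01 htail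
    _ ≤ √N * (max (μ / 2) (2 / η ^ 2) * (B * (N : ℝ) ^ (ε / 2 - 1)) ^ 2) := by gcongr
    _ = max (μ / 2) (2 / η ^ 2) * B ^ 2 * (N : ℝ) ^ (-(3:ℝ)/2 + ε) := by
        have hpow : √(N : ℝ) * ((N : ℝ) ^ (ε / 2 - 1)) ^ 2 = (N : ℝ) ^ (-(3:ℝ)/2 + ε) := by
          rw [Real.sqrt_eq_rpow, ← Real.rpow_mul_natCast hNpos.le, ← Real.rpow_add hNpos]
          ring_nf
        rw [← hpow]
        ring

/-- under the regularity conditions, the gradient norm of the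
normalized average power for the optimal uniform (in dB) codebook scales as
`O(N^{−3/2+ε})` for every `ε > 0`. -/
theorem stmt8
    (f f' F : ℝ → ℝ) (μ η a : ℝ)
    (hμ : 0 < μ) (hη0 : 0 < η) (ha : 0 < a)
    (hfpos : ∀ x ∈ Ioi (0:ℝ), 0 < f x)
    (hfder : ∀ x ∈ Ioi (0:ℝ), HasDerivAt f (f' x) x)
    (hf'bd : ∀ x ∈ Ioi (0:ℝ), |f' x| ≤ μ)
    (hfint : IntegrableOn f (Ioi 0))
    (hfone : ∫ x in Ioi (0:ℝ), f x = 1)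
    (hmean : IntegrableOn (fun y : ℝ => y * f y) (Ioi 0))
    (hηlim : Tendsto (fun y : ℝ => -f y / f' y) atTop (nhds η))
    (hyf : Tendsto (fun y : ℝ => y * f y) atTop (nhds 0))
    (hF : ∀ x, F x = ∫ t in Ioc (0:ℝ) x, f t)
    (hF' : ∀ x ∈ Ioi (0:ℝ), HasDerivAt F (f x) x)
    (L : ℕ → ℝ)
    (hL : ∀ N : ℕ, 3 ≤ N → 0 < L N ∧ L N * (1 + L N) ^ (N - 1) = η / a) :
    ∀ ε : ℝ, 0 < ε →
      ∃ C : ℝ, 0 < C ∧ ∃ N₀ : ℕ, ∀ N : ℕ, N₀ ≤ N →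
        gradNormP F N (quantLevels a (1 + L N)) ≤
          C * (N : ℝ) ^ (-(3:ℝ)/2 + ε) :=
  stmt8_general f f' F μ η a hη0 ha hfpos hfder hf'bd hfint hfone hyf hF hF' L hL
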